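/- In CP^2_10, the four vertices x_{11}, x_{22}, x_{33}, x_{44} are exactly the vertices whose links are 2-neighbourly simplicial complexes (every pair of vertices of the link is an edge of the link). -/

import Mathlib

open Finset

section Generic

variable {V : Type*}

/-- Faces of the simplicial complex generated by a set of facets. -/
def cFaces (X : Set (Finset V)) : Set (Finset V) :=
  {A | A.Nonempty ∧ ∃ F ∈ X, A ⊆ F}

/-- Number of faces of dimension `k`. -/
noncomputable def fVec (X : Set (Finset V)) (k : ℕ) : ℕ :=
  Set.ncard {A | A ∈ cFaces X ∧ A.card = k + 1}

/-- Faces of the link of a simplex. -/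
def lkFaces [DecidableEq V] (X : Set (Finset V)) (σ : Finset V) : Set (Finset V) :=
  {τ | τ.Nonempty ∧ Disjoint τ σ ∧ τ ∪ σ ∈ cFaces X}

/-- Degree of a simplex: number of vertices of its link. -/
noncomputable def degS [DecidableEq V] (X : Set (Finset V)) (σ : Finset V) : ℕ :=
  Set.ncard {v : V | v ∉ σ ∧ insert v σ ∈ cFaces X}

def TwoNeighbourly [DecidableEq V] (X : Set (Finset V)) : Prop :=
  ∀ u v : V, {u} ∈ cFaces X → {v} ∈ cFaces X → u ≠ v → ({u, v} : Finset V) ∈ cFaces X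

/-- Geometric realization of the complex with facet set `X`. -/
def realization [Fintype V] (X : Set (Finset V)) : Set (V → ℝ) :=
  {f | (∀ v, 0 ≤ f v) ∧ (∑ v, f v) = 1 ∧ ∃ F ∈ X, ∀ v, f v ≠ 0 → v ∈ F}

/-- `X` triangulates the `d`-sphere. -/
def TriangulatesSphere [Fintype V] (X : Set (Finset V)) (d : ℕ) : Prop :=
  Nonempty ((realization X) ≃ₜ (Metric.sphere (0 : EuclideanSpace ℝ (Fin (d + 1))) 1))

/-- The edge graph of a simplicial complex. -/
def cGraph [DecidableEq V] (X : Set (Finset V)) : SimpleGraph V where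
  Adj u v := u ≠ v ∧ ({u, v} : Finset V) ∈ cFaces X
  symm := by
    refine ⟨fun u v h => ?_⟩
    exact ⟨h.1.symm, by rw [Finset.pair_comm]; exact h.2⟩
  loopless := ⟨fun v h => h.1 rfl⟩

/-- The subgroup of all vertex permutations which fix `S` pointwise and
map faces to faces. -/
def autRel [DecidableEq V] (X : Set (Finset V)) (S : Set V) : Subgroup (Equiv.Perm V) where
  carrier := {π | (∀ v ∈ S, π v = v) ∧ ∀ F : Finset V, F ∈ X ↔ F.image π ∈ X}
  one_mem' := by
    refine ⟨fun v _ => rfl, fun F => ?_⟩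
    simp
  mul_mem' := by
    rintro a b ⟨ha1, ha2⟩ ⟨hb1, hb2⟩
    refine ⟨fun v hv => ?_, fun F => ?_⟩
    · show a (b v) = v
      rw [hb1 v hv, ha1 v hv]
    · have h : F.image ⇑(a * b) = (F.image ⇑b).image ⇑a := by
        rw [Finset.image_image]; rfl
      rw [h]
      exact (hb2 F).trans (ha2 (F.image ⇑b))
  inv_mem' := by
    rintro a ⟨ha1, ha2⟩
    refine ⟨fun v hv => ?_, fun F => ?_⟩
    · have := ha1 v hv
      exact a.injective (by simpa using this.symm)
    · have h := ha2 (F.image ⇑a⁻¹)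
      have e : (F.image ⇑a⁻¹).image ⇑a = F := by
        rw [Finset.image_image]
        refine Finset.ext fun x => ?_
        simp
      rw [e] at h
      exact h.symm

/-- An icosahedron: a 12-vertex simplicial 2-sphere all whose vertices have degree 5. -/
def IsIcosahedron [Fintype V] [DecidableEq V] (X : Set (Finset V)) : Prop :=
  Fintype.card V = 12 ∧ (∀ F ∈ X, F.card = 3) ∧ (∀ v : V, {v} ∈ cFaces X) ∧
    (∀ v : V, degS X {v} = 5) ∧ TriangulatesSphere X 2

/-- Two icosahedra on the same vertex set are antimorphic if the identity map
exchanges distance one and distance two. -/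
def Antimorphic [DecidableEq V] (X Y : Set (Finset V)) : Prop :=
  ∀ u v : V, u ≠ v →
    (((cGraph X).Adj u v ↔ (cGraph Y).dist u v = 2) ∧
      ((cGraph X).dist u v = 2 ↔ (cGraph Y).Adj u v))

end Generic

/-- The real projective plane, as the quotient of the 2-sphere by the antipodal map. -/
def antipodalSetoid : Setoid (Metric.sphere (0 : EuclideanSpace ℝ (Fin 3)) 1) where
  r x y := (x : EuclideanSpace ℝ (Fin 3)) = y ∨ (x : EuclideanSpace ℝ (Fin 3)) = -y
  iseqv := by
    constructor
    · intro x; exact Or.inl rfl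
    · rintro x y (h | h)
      · exact Or.inl h.symm
      · exact Or.inr (by rw [h, neg_neg])
    · rintro x y z (h1 | h1) (h2 | h2)
      · exact Or.inl (h1.trans h2)
      · exact Or.inr (by rw [h1, h2])
      · exact Or.inr (by rw [h1, h2])
      · exact Or.inl (by rw [h1, h2, neg_neg])

def RealProjectivePlane : Type := Quotient antipodalSetoid

noncomputable instance : TopologicalSpace RealProjectivePlane :=
  instTopologicalSpaceQuotient

abbrev V4 : Type := Fin 4 × Fin 4

def x (i j : Fin 4) : V4 := (i, j)

/-- Action of a permutation of indices on `V4`, possibly composed with the flip. -/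
def permV (σ : Equiv.Perm (Fin 4)) (s : Bool) : V4 → V4 :=
  fun p => if s then (σ p.2, σ p.1) else (σ p.1, σ p.2)

def basic16 : Set (Finset V4) :=
  {({x 0 0, x 1 1, x 2 2, x 0 1, x 0 2} : Finset V4),
   ({x 0 0, x 1 1, x 0 1, x 0 3, x 2 3} : Finset V4),
   ({x 0 0, x 1 1, x 0 3, x 1 3, x 2 3} : Finset V4),
   ({x 0 0, x 1 1, x 1 0, x 1 3, x 2 0} : Finset V4),
   ({x 0 0, x 1 1, x 1 3, x 2 0, x 2 3} : Finset V4)}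

/-- The facets of `(S² × S²)₁₆`. -/
def facets16 : Set (Finset V4) :=
  {F | ∃ σ : Equiv.Perm (Fin 4), Equiv.Perm.sign σ = 1 ∧
    ∃ s : Bool, ∃ B ∈ basic16, F = B.image (permV σ s)}

/-- Sorting an index pair: the quotient map identifying `x i j` with `x j i`. -/
def sortPair : V4 → V4 := fun p => if p.1 ≤ p.2 then p else (p.2, p.1)

def basic10 : Set (Finset V4) :=
  {({x 0 0, x 1 1, x 2 2, x 0 1, x 0 2} : Finset V4),
   ({x 0 0, x 1 1, x 0 1, x 0 3, x 2 3} : Finset V4),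
   ({x 0 0, x 1 1, x 0 3, x 1 3, x 2 3} : Finset V4),
   ({x 0 0, x 1 1, x 0 1, x 0 2, x 1 3} : Finset V4),
   ({x 0 0, x 1 1, x 0 2, x 1 3, x 2 3} : Finset V4)}

/-- The facets of `CP²₁₀`: the orbit of the five basic facets under `A₄` acting
on the indices (followed by sorting each index pair). -/
def facets10 : Set (Finset V4) :=
  {F | ∃ σ : Equiv.Perm (Fin 4), Equiv.Perm.sign σ = 1 ∧
    ∃ B ∈ basic10, F = B.image (fun p => sortPair (σ p.1, σ p.2))}

/-- The cyclic permutation sending each entry of the list to the next one. -/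
def cyc : List V4 → Equiv.Perm V4
  | a :: b :: rest => Equiv.swap a b * cyc (b :: rest)
  | _ => 1

def gPerm : Equiv.Perm V4 :=
  cyc [x 0 1, x 1 0, x 1 3, x 3 1, x 0 3, x 3 0, x 3 2, x 2 3, x 0 2, x 2 0, x 2 1, x 1 2]

def hPerm : Equiv.Perm V4 :=
  cyc [x 0 1, x 0 3, x 1 0, x 1 3, x 2 0] * cyc [x 0 2, x 3 1, x 3 2, x 2 1, x 2 3]

def G12 : Subgroup (Equiv.Perm V4) := Subgroup.closure {gPerm, hPerm}

def basic12A : Finset V4 := {x 0 1, x 0 3, x 1 0, x 1 3, x 2 0}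

def basic12B : Finset V4 := {x 0 1, x 0 2, x 0 3, x 1 0, x 2 0}

/-- The facets of `(S² × S²)₁₂`. -/
def facets12 : Set (Finset V4) :=
  {F | ∃ π ∈ G12, F = basic12A.image ⇑π ∨ F = basic12B.image ⇑π}

/-!
A vertex link is 2-neighbourly exactly when any two neighbours of the vertex span a triangle
with it. `CP²₁₀` is the `A₄`-orbit of five facets, so it is given by an explicit finset of
facets, on which this criterion is checked for all ten vertices by direct computation.
-/

section Complex

variable {V : Type*}

theorem mem_cFaces_coe {L : Finset (Finset V)} {A : Finset V} :
    A ∈ cFaces (L : Set (Finset V)) ↔ A.Nonempty ∧ ∃ F ∈ L, A ⊆ F := by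
  simp [cFaces]

variable [DecidableEq V]

instance (L : Finset (Finset V)) : DecidablePred (· ∈ cFaces (L : Set (Finset V))) :=
  fun _ => decidable_of_iff _ mem_cFaces_coe.symm

theorem mem_cFaces_lkFaces {X : Set (Finset V)} {σ A : Finset V} :
    A ∈ cFaces (lkFaces X σ) ↔ A ∈ lkFaces X σ := by
  constructor
  · rintro ⟨hA, B, ⟨-, hBσ, -, F, hF, hBF⟩, hAB⟩
    exact ⟨hA, disjoint_of_subset_left hAB hBσ, hA.mono subset_union_left,
      F, hF, (union_subset_union hAB subset_rfl).trans hBF⟩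
  · exact fun h => ⟨h.1, A, h, subset_rfl⟩

def NeighboursSpanTriangles (X : Set (Finset V)) (v : V) : Prop :=
  ∀ u w : V, u ≠ v → w ≠ v → u ≠ w → {u, v} ∈ cFaces X → {w, v} ∈ cFaces X →
    {u, w, v} ∈ cFaces X

instance [Fintype V] (L : Finset (Finset V)) (v : V) :
    Decidable (NeighboursSpanTriangles (L : Set (Finset V)) v) := by
  unfold NeighboursSpanTriangles
  infer_instance

theorem twoNeighbourly_lkFaces_singleton_iff {X : Set (Finset V)} {v : V} :
    TwoNeighbourly (lkFaces X {v}) ↔ NeighboursSpanTriangles X v := by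
  simp only [TwoNeighbourly, NeighboursSpanTriangles, mem_cFaces_lkFaces]
  simp only [lkFaces, Set.mem_ofPred_eq, singleton_nonempty, insert_nonempty, true_and,
    disjoint_singleton, disjoint_insert_left, singleton_union, insert_union, mem_singleton, ne_eq]
  constructor
  · intro h u w hu hw huw hu' hw'
    exact (h u w ⟨hu, hu'⟩ ⟨hw, hw'⟩ huw).2
  · intro h u w ⟨hu, hu'⟩ ⟨hw, hw'⟩ huw
    exact ⟨⟨hu, hw⟩, h u w hu hw huw hu' hw'⟩

end Complex

def basic10Finset : Finset (Finset V4) :=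
  {{x 0 0, x 1 1, x 2 2, x 0 1, x 0 2}, {x 0 0, x 1 1, x 0 1, x 0 3, x 2 3},
    {x 0 0, x 1 1, x 0 3, x 1 3, x 2 3}, {x 0 0, x 1 1, x 0 1, x 0 2, x 1 3},
    {x 0 0, x 1 1, x 0 2, x 1 3, x 2 3}}

theorem coe_basic10Finset : (basic10Finset : Set (Finset V4)) = basic10 := by
  simp only [basic10Finset, coe_insert, coe_singleton]
  rfl

def facets10Finset : Finset (Finset V4) :=
  (univ.filter fun σ : Equiv.Perm (Fin 4) => Equiv.Perm.sign σ = 1).biUnion fun σ =>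
    basic10Finset.image fun B => B.image fun p => sortPair (σ p.1, σ p.2)

theorem coe_facets10Finset : (facets10Finset : Set (Finset V4)) = facets10 := by
  ext F
  simp only [facets10Finset, facets10, ← coe_basic10Finset, coe_biUnion, coe_filter, mem_univ,
    true_and, Set.mem_iUnion, Set.mem_ofPred_eq, coe_image, Set.mem_image, mem_coe, exists_prop]
  simp only [eq_comm]

theorem neighboursSpanTriangles_facets10Finset_iff : ∀ v : V4,
    {v} ∈ cFaces (facets10Finset : Set (Finset V4)) →
      (NeighboursSpanTriangles (facets10Finset : Set (Finset V4)) v ↔ v.1 = v.2) := by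
  decide +kernel

theorem mem_diagonal_iff (v : V4) : v ∈ ({x 0 0, x 1 1, x 2 2, x 3 3} : Set V4) ↔ v.1 = v.2 := by
  simp only [Set.mem_insert_iff, Set.mem_singleton_iff]
  revert v
  decide

/-- in `CP²₁₀`, the vertices with 2-neighbourly links are exactly
`x 0 0, x 1 1, x 2 2, x 3 3`. -/
theorem stmt_7 :
    ∀ v : V4, {v} ∈ cFaces facets10 →
      (TwoNeighbourly (lkFaces facets10 {v}) ↔
        v ∈ ({x 0 0, x 1 1, x 2 2, x 3 3} : Set V4)) := by
  intro v hv
  rw [← coe_facets10Finset] at hv ⊢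
  rw [twoNeighbourly_lkFaces_singleton_iff, mem_diagonal_iff]
  exact neighboursSpanTriangles_facets10Finset_iff v hv
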